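/- arXiv:math/0309449 — 5 statements merged into one kernel-verified Lean document; each statement's English description precedes it below -/
import Mathlib

section
/- Let R : ℝ^d → (0,∞) be a 1-Lipschitz function and ρ the associated special metric. Then for all x, y ∈ ℝ^d, |x - y| ≤ 2^{3·ρ(x,y)} · R(x). -/
open MeasureTheory intervalIntegral Set in
lemma curve_bound {d : ℕ} (R : EuclideanSpace ℝ (Fin d) → ℝ)
    (hlip : LipschitzWith 1 R) (hpos : ∀ x, 0 < R x)
    (x y : EuclideanSpace ℝ (Fin d))
    (γ γ' : ℝ → EuclideanSpace ℝ (Fin d))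
    (hderiv : ∀ t ∈ Set.Icc (0:ℝ) 1, HasDerivAt γ (γ' t) t)
    (hcont : ContinuousOn γ' (Set.Icc 0 1)) (h0 : γ 0 = x) (h1 : γ 1 = y) :
    Real.log (R x + ‖x - y‖) - Real.log (R x) ≤ ∫ t in (0:ℝ)..1, ‖γ' t‖ / R (γ t) := by
  set c : ℝ → ℝ := fun t => max 0 (min 1 t) with hc
  have hccont : Continuous c := continuous_const.max (continuous_const.min continuous_id)
  have hcmem : ∀ t, c t ∈ Icc (0:ℝ) 1 := fun t =>
    ⟨le_max_left _ _, max_le zero_le_one (min_le_left _ _)⟩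
  have hceq : ∀ t ∈ Icc (0:ℝ) 1, c t = t := fun t ht => by
    simp [hc, min_eq_right ht.2, max_eq_right ht.1]
  set g : ℝ → ℝ := fun t => ‖γ' (c t)‖ with hg
  have hgcont : Continuous g := (hcont.comp_continuous hccont hcmem).norm
  have hgnn : ∀ t, 0 ≤ g t := fun t => norm_nonneg _
  set L : ℝ → ℝ := fun t => ∫ s in (0:ℝ)..t, g s with hL
  have hLderiv : ∀ t, HasDerivAt L (g t) t := fun t =>
    (hgcont.integral_hasStrictDerivAt 0 t).hasDerivAt
  have hLnn : ∀ t, 0 ≤ t → 0 ≤ L t := fun t ht =>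
    intervalIntegral.integral_nonneg ht (fun s _ => hgnn s)
  have hRx : (0:ℝ) < R x := hpos x
  have hden : ∀ t, 0 ≤ t → 0 < R x + L t := fun t ht => by
    have := hLnn t ht; linarith
  -- ‖γ t - x‖ ≤ L t on [0,1]
  have harc : ∀ t ∈ Icc (0:ℝ) 1, ‖γ t - x‖ ≤ L t := by
    intro t ht
    have hsub : uIcc (0:ℝ) t ⊆ Icc 0 1 := by
      rw [uIcc_of_le ht.1]; exact Icc_subset_Icc le_rfl ht.2
    have hint : IntervalIntegrable γ' volume 0 t :=
      (hcont.mono hsub).intervalIntegrable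
    have hftc : ∫ s in (0:ℝ)..t, γ' s = γ t - γ 0 :=
      intervalIntegral.integral_eq_sub_of_hasDerivAt
        (fun s hs => hderiv s (hsub hs)) hint
    calc ‖γ t - x‖ = ‖∫ s in (0:ℝ)..t, γ' s‖ := by rw [hftc, h0]
      _ ≤ ∫ s in (0:ℝ)..t, ‖γ' s‖ := intervalIntegral.norm_integral_le_integral_norm ht.1
      _ = L t := by
          refine intervalIntegral.integral_congr fun s hs => ?_
          rw [hg]; simp only []
          rw [hceq s (hsub hs)]
  have hRle : ∀ t ∈ Icc (0:ℝ) 1, R (γ t) ≤ R x + L t := by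
    intro t ht
    have h1' : R (γ t) - R x ≤ ‖γ t - x‖ := by
      have := hlip.dist_le_mul (γ t) x
      rw [Real.dist_eq, dist_eq_norm] at this
      simp only [NNReal.coe_one, one_mul] at this
      have := abs_le.1 this
      linarith [this.1, this.2]
    linarith [harc t ht]
  -- FTC for log (R x + L t)
  set F : ℝ → ℝ := fun t => Real.log (R x + L t) with hF
  have hFderiv : ∀ t ∈ uIcc (0:ℝ) 1, HasDerivAt F (g t / (R x + L t)) t := by
    intro t ht
    rw [uIcc_of_le zero_le_one] at ht
    exact (((hLderiv t).const_add (R x)).log (ne_of_gt (hden t ht.1)))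
  have hquotcont : ContinuousOn (fun t => g t / (R x + L t)) (Icc 0 1) := by
    apply ContinuousOn.div hgcont.continuousOn
      (continuous_const.add (continuous_iff_continuousAt.2
        fun t => (hLderiv t).continuousAt)).continuousOn
    intro t ht; exact ne_of_gt (hden t ht.1)
  have hquotint : IntervalIntegrable (fun t => g t / (R x + L t)) volume 0 1 := by
    apply ContinuousOn.intervalIntegrable
    rwa [uIcc_of_le zero_le_one]
  have hftc2 : ∫ t in (0:ℝ)..1, g t / (R x + L t) = F 1 - F 0 :=
    intervalIntegral.integral_eq_sub_of_hasDerivAt hFderiv hquotint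
  have hL0 : L 0 = 0 := intervalIntegral.integral_same
  -- compare integrals
  have hγcont : ContinuousOn γ (Icc 0 1) := fun t ht =>
    (hderiv t ht).continuousAt.continuousWithinAt
  have hrhscont : ContinuousOn (fun t => ‖γ' t‖ / R (γ t)) (Icc 0 1) :=
    ContinuousOn.div hcont.norm
      ((hlip.continuous.comp_continuousOn hγcont))
      (fun t ht => ne_of_gt (hpos _))
  have hmono : ∫ t in (0:ℝ)..1, g t / (R x + L t)
      ≤ ∫ t in (0:ℝ)..1, ‖γ' t‖ / R (γ t) := by
    apply intervalIntegral.integral_mono_on zero_le_one hquotint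
    · exact ContinuousOn.intervalIntegrable
        (by rwa [uIcc_of_le zero_le_one])
    · intro t ht
      have hgt : g t = ‖γ' t‖ := by rw [hg]; simp only []; rw [hceq t ht]
      rw [hgt]
      exact div_le_div_of_nonneg_left (norm_nonneg _) (hpos _) (hRle t ht)
  -- log bound
  have hxy : ‖x - y‖ ≤ L 1 := by
    have := harc 1 (by norm_num)
    rwa [h1, norm_sub_rev] at this
  have hlogle : Real.log (R x + ‖x - y‖) ≤ Real.log (R x + L 1) :=
    Real.log_le_log (by positivity) (by linarith)
  calc Real.log (R x + ‖x - y‖) - Real.log (R x)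
      ≤ Real.log (R x + L 1) - Real.log (R x) := by linarith
    _ = F 1 - F 0 := by rw [hF]; simp only []; rw [hL0, add_zero]
    _ = ∫ t in (0:ℝ)..1, g t / (R x + L t) := hftc2.symm
    _ ≤ _ := hmono



open MeasureTheory

/-- The special metric associated to a positive 1-Lipschitz function `R`:
`ρ(x,y) = inf_γ ∫_γ |dz| / R(z)`, the infimum running over (piecewise) C¹ curves
from `x` to `y`, parametrized over `[0,1]`. -/
noncomputable def specialDist {d : ℕ} (R : EuclideanSpace ℝ (Fin d) → ℝ)
    (x y : EuclideanSpace ℝ (Fin d)) : ℝ :=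
  sInf { L | ∃ γ γ' : ℝ → EuclideanSpace ℝ (Fin d),
    (∀ t ∈ Set.Icc (0:ℝ) 1, HasDerivAt γ (γ' t) t) ∧
    ContinuousOn γ' (Set.Icc 0 1) ∧ γ 0 = x ∧ γ 1 = y ∧
    L = ∫ t in (0:ℝ)..1, ‖γ' t‖ / R (γ t) }

/-- `|x - y| ≤ 2 ^ (3 ρ(x,y)) · R x`. -/
theorem stmt_2 {d : ℕ} (R : EuclideanSpace ℝ (Fin d) → ℝ)
    (hlip : LipschitzWith 1 R) (hpos : ∀ x, 0 < R x)
    (x y : EuclideanSpace ℝ (Fin d)) :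
    ‖x - y‖ ≤ (2 : ℝ) ^ (3 * specialDist R x y) * R x := by
  set ρ := specialDist R x y with hρ
  have hRx : (0:ℝ) < R x := hpos x
  -- the set of admissible lengths is nonempty (straight segment)
  have hne : { L | ∃ γ γ' : ℝ → EuclideanSpace ℝ (Fin d),
      (∀ t ∈ Set.Icc (0:ℝ) 1, HasDerivAt γ (γ' t) t) ∧
      ContinuousOn γ' (Set.Icc 0 1) ∧ γ 0 = x ∧ γ 1 = y ∧
      L = ∫ t in (0:ℝ)..1, ‖γ' t‖ / R (γ t) }.Nonempty := by
    refine ⟨_, fun t => x + t • (y - x), fun _ => y - x, fun t _ => ?_,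
      continuousOn_const, by simp, by simp, rfl⟩
    simpa using ((hasDerivAt_id t).smul_const (y - x)).const_add x
  -- lower bound for the infimum
  have hlb : Real.log (R x + ‖x - y‖) - Real.log (R x) ≤ ρ := by
    rw [hρ, specialDist]
    refine le_csInf hne ?_
    rintro L ⟨γ, γ', hd, hc, h0, h1, rfl⟩
    exact curve_bound R hlip hpos x y γ γ' hd hc h0 h1
  have hρnn : 0 ≤ ρ := by
    have : Real.log (R x) ≤ Real.log (R x + ‖x - y‖) :=
      Real.log_le_log hRx (le_add_of_nonneg_right (norm_nonneg _))
    linarith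
  -- exponentiate
  have hexp : (R x + ‖x - y‖) / R x ≤ Real.exp ρ := by
    have := Real.exp_le_exp.2 hlb
    rwa [Real.exp_sub, Real.exp_log (by positivity), Real.exp_log hRx] at this
  have h2 : R x + ‖x - y‖ ≤ Real.exp ρ * R x := (div_le_iff₀ hRx).1 hexp
  have h3 : Real.exp ρ ≤ (2:ℝ) ^ (3 * ρ) := by
    rw [Real.rpow_def_of_pos two_pos, Real.exp_le_exp]
    nlinarith [Real.log_two_gt_d9, hρnn]
  nlinarith [mul_le_mul_of_nonneg_right h3 hRx.le]
end

section
/- Let R : ℝ^d → (0,∞) be a 1-Lipschitz function and γ a piecewise C¹ curve from x to y. Define a chain x₀ = x, x₁, …, x_N = y on γ inductively: given x_j, if the remaining part [x_j, y]_γ of the curve lies in the closed ball B(x_j; R(x_j)/2) set x_{j+1} = y and stop with N = j+1; otherwise let x_{j+1} be the first point of [x_j, y]_γ on the sphere ∂B(x_j; R(x_j)/2). Then the length N = N(γ) of this chain satisfies N(γ) ≤ 3·∫_γ |dz|/R(z) + 1. -/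
open MeasureTheory

/-!
Along each full step of the chain the curve travels at least `R(x_j)/2`, and it stays in
`B(x_j; R(x_j)/2)`, where the 1-Lipschitz weight satisfies `R ≤ 3R(x_j)/2`. So every full step
contributes at least `(R(x_j)/2) / (3R(x_j)/2) = 1/3` to `∫_γ |dz|/R(z)`; only the last step
may contribute less.
-/

theorem IntervalIntegrable.trans_fin {E : Type*} [NormedAddCommGroup E] {f : ℝ → E} {N : ℕ}
    {t : Fin (N + 1) → ℝ}
    (hf : ∀ j : Fin N, IntervalIntegrable f volume (t j.castSucc) (t j.succ)) :
    IntervalIntegrable f volume (t 0) (t (Fin.last N)) := by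
  induction N with
  | zero => exact .refl
  | succ M ih =>
    have hinit := ih (t := fun i => t i.castSucc) (fun j => hf j.castSucc)
    rw [Fin.castSucc_zero] at hinit
    rw [← Fin.succ_last]
    exact hinit.trans (hf (Fin.last M))

theorem intervalIntegral.sum_integral_fin_partition {E : Type*} [NormedAddCommGroup E]
    [NormedSpace ℝ E] {f : ℝ → E} {N : ℕ} {t : Fin (N + 1) → ℝ}
    (hf : ∀ j : Fin N, IntervalIntegrable f volume (t j.castSucc) (t j.succ)) :
    ∑ j : Fin N, ∫ s in t j.castSucc..t j.succ, f s = ∫ s in t 0..t (Fin.last N), f s := by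
  induction N with
  | zero => simp
  | succ M ih =>
    have hinit := ih (t := fun i => t i.castSucc) (fun j => hf j.castSucc)
    have hinit_int := IntervalIntegrable.trans_fin (t := fun i => t i.castSucc)
      (fun j => hf j.castSucc)
    simp only [← Fin.succ_castSucc, Fin.castSucc_zero] at hinit hinit_int
    rw [Fin.sum_univ_castSucc, hinit, ← Fin.succ_last]
    exact intervalIntegral.integral_add_adjacent_intervals hinit_int (hf (Fin.last M))

section Curve

variable {E : Type*} [NormedAddCommGroup E] [NormedSpace ℝ E] {γ γ' : ℝ → E} {a b : ℝ}

theorem intervalIntegrable_norm_deriv_div {R : E → ℝ} (hR : Continuous R)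
    (hpos : ∀ x, 0 < R x) (hab : a ≤ b) (hγ : ∀ s ∈ Set.Icc a b, HasDerivAt γ (γ' s) s)
    (hγ' : ContinuousOn γ' (Set.Icc a b)) :
    IntervalIntegrable (fun s => ‖γ' s‖ / R (γ s)) volume a b :=
  (hγ'.norm.div (hR.comp_continuousOn fun s hs => (hγ s hs).continuousAt.continuousWithinAt)
    fun _ _ => (hpos _).ne').intervalIntegrable_of_Icc hab

variable [CompleteSpace E]

theorem norm_sub_le_integral_norm_deriv (hab : a ≤ b)
    (hγ : ∀ s ∈ Set.Icc a b, HasDerivAt γ (γ' s) s) (hγ' : ContinuousOn γ' (Set.Icc a b)) :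
    ‖γ b - γ a‖ ≤ ∫ s in a..b, ‖γ' s‖ := by
  rw [← intervalIntegral.integral_eq_sub_of_hasDerivAt
    (fun s hs => hγ s (Set.uIcc_of_le hab ▸ hs)) (hγ'.intervalIntegrable_of_Icc hab)]
  exact intervalIntegral.norm_integral_le_integral_norm hab

theorem one_third_le_integral_div_of_forall_norm_sub_le {R : E → ℝ} (hlip : LipschitzWith 1 R)
    (hpos : ∀ x, 0 < R x) (hab : a ≤ b)
    (hγ : ∀ s ∈ Set.Icc a b, HasDerivAt γ (γ' s) s) (hγ' : ContinuousOn γ' (Set.Icc a b))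
    (hexit : R (γ a) / 2 ≤ ‖γ b - γ a‖)
    (hball : ∀ s ∈ Set.Icc a b, ‖γ s - γ a‖ ≤ R (γ a) / 2) :
    1 / 3 ≤ ∫ s in a..b, ‖γ' s‖ / R (γ s) := by
  have hRa := hpos (γ a)
  have hR_le (s : ℝ) (hs : s ∈ Set.Icc a b) : R (γ s) ≤ 3 / 2 * R (γ a) := by
    have := hlip.le_add_mul (γ s) (γ a)
    rw [NNReal.coe_one, one_mul, dist_eq_norm] at this
    linarith [hball s hs]
  calc 1 / 3 = (R (γ a) / 2) / (3 / 2 * R (γ a)) := by field_simp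
    _ ≤ (∫ s in a..b, ‖γ' s‖) / (3 / 2 * R (γ a)) := by
      gcongr; exact hexit.trans (norm_sub_le_integral_norm_deriv hab hγ hγ')
    _ = ∫ s in a..b, ‖γ' s‖ / (3 / 2 * R (γ a)) := (intervalIntegral.integral_div _ _).symm
    _ ≤ ∫ s in a..b, ‖γ' s‖ / R (γ s) := by
      refine intervalIntegral.integral_mono_on hab ?_ ?_ fun s hs => ?_
      · exact (hγ'.norm.div_const _).intervalIntegrable_of_Icc hab
      · exact intervalIntegrable_norm_deriv_div hlip.continuous hpos hab hγ hγ'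
      · gcongr
        exacts [hpos _, hR_le s hs]

theorem natCast_le_three_mul_integral_div_add_one {R : E → ℝ} (hlip : LipschitzWith 1 R)
    (hpos : ∀ x, 0 < R x) {N : ℕ} {t : Fin (N + 1) → ℝ} (hmono : Monotone t)
    (hγ : ∀ s ∈ Set.Icc (t 0) (t (Fin.last N)), HasDerivAt γ (γ' s) s)
    (hγ' : ContinuousOn γ' (Set.Icc (t 0) (t (Fin.last N))))
    (hstep : ∀ j : Fin N, (j : ℕ) + 1 ≤ N - 1 →
      R (γ (t j.castSucc)) / 2 ≤ ‖γ (t j.succ) - γ (t j.castSucc)‖ ∧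
      ∀ s ∈ Set.Icc (t j.castSucc) (t j.succ),
        ‖γ s - γ (t j.castSucc)‖ ≤ R (γ (t j.castSucc)) / 2) :
    (N : ℝ) ≤ 3 * (∫ s in t 0..t (Fin.last N), ‖γ' s‖ / R (γ s)) + 1 := by
  rcases N with _ | M
  · simp
  have hle (j : Fin (M + 1)) : t j.castSucc ≤ t j.succ := hmono j.castSucc_le_succ
  have hsub (j : Fin (M + 1)) :
      Set.Icc (t j.castSucc) (t j.succ) ⊆ Set.Icc (t 0) (t (Fin.last (M + 1))) :=
    Set.Icc_subset_Icc (hmono (Fin.zero_le _)) (hmono (Fin.le_last _))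
  have hγj (j : Fin (M + 1)) := fun s hs => hγ s (hsub j hs)
  have hγ'j (j : Fin (M + 1)) := hγ'.mono (hsub j)
  have hfull (i : Fin M) : 1 / 3 ≤ ∫ s in t i.castSucc.castSucc..t i.castSucc.succ,
      ‖γ' s‖ / R (γ s) :=
    have hi := hstep i.castSucc (by simp)
    one_third_le_integral_div_of_forall_norm_sub_le hlip hpos (hle _) (hγj _) (hγ'j _) hi.1 hi.2
  have hlast : 0 ≤ ∫ s in t (Fin.last M).castSucc..t (Fin.last M).succ, ‖γ' s‖ / R (γ s) :=
    intervalIntegral.integral_nonneg (hle _) fun s _ => div_nonneg (norm_nonneg _) (hpos _).le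
  have hsum := Finset.sum_le_sum fun i (_ : i ∈ Finset.univ) => hfull i
  rw [Finset.sum_const, Finset.card_univ, Fintype.card_fin, nsmul_eq_mul] at hsum
  have hpartition := intervalIntegral.sum_integral_fin_partition fun j =>
    intervalIntegrable_norm_deriv_div hlip.continuous hpos (hle j) (hγj j) (hγ'j j)
  rw [Fin.sum_univ_castSucc] at hpartition
  push_cast
  linarith

end Curve

theorem stmt_3_general {d : ℕ} (R : EuclideanSpace ℝ (Fin d) → ℝ)
    (hlip : LipschitzWith 1 R) (hpos : ∀ x, 0 < R x)
    (γ γ' : ℝ → EuclideanSpace ℝ (Fin d))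
    (hγ : ∀ t ∈ Set.Icc (0:ℝ) 1, HasDerivAt γ (γ' t) t)
    (hγ' : ContinuousOn γ' (Set.Icc 0 1))
    (N : ℕ) (t : Fin (N + 1) → ℝ) (hmono : Monotone t)
    (ht0 : t 0 = 0) (htN : t (Fin.last N) = 1)
    (hstep : ∀ j : Fin N, (j : ℕ) + 1 ≤ N - 1 →
      ‖γ (t j.succ) - γ (t j.castSucc)‖ = R (γ (t j.castSucc)) / 2 ∧
      ∀ s ∈ Set.Icc (t j.castSucc) (t j.succ),
        ‖γ s - γ (t j.castSucc)‖ ≤ R (γ (t j.castSucc)) / 2) :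
    (N : ℝ) ≤ 3 * ∫ s in (0:ℝ)..1, ‖γ' s‖ / R (γ s) + 1 := by
  have hchain := natCast_le_three_mul_integral_div_add_one hlip hpos hmono
    (by rwa [ht0, htN]) (by rwa [ht0, htN]) fun j hj => (hstep j hj).imp_left ge_of_eq
  rw [ht0, htN] at hchain
  have hint := intervalIntegrable_norm_deriv_div hlip.continuous hpos zero_le_one hγ hγ'
  rw [intervalIntegral.integral_add hint intervalIntegrable_const, intervalIntegral.integral_const]
  simp only [sub_zero, smul_eq_mul, mul_one]
  linarith

/-- index of a curve.  Let `γ` be a (piecewise) C¹ curve on `[0,1]` from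
`x = γ 0` to `y = γ 1`, with derivative `γ'`, and let `x_j = γ (t j)` (for a monotone
partition `0 = t 0 ≤ … ≤ t N = 1`) be the chain constructed in the paper: for every
`j ≤ N - 2` the point `x_{j+1}` is the first point of the remaining curve on the sphere
`∂B(x_j; R(x_j)/2)` — in particular `‖x_{j+1} - x_j‖ = R(x_j)/2` and the piece of the
curve between `t j` and `t (j+1)` stays in the closed ball `B(x_j; R(x_j)/2)`.
Then `N ≤ 3 ∫_γ |dz|/R(z) + 1`. -/
theorem stmt_3 {d : ℕ} (R : EuclideanSpace ℝ (Fin d) → ℝ)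
    (hlip : LipschitzWith 1 R) (hpos : ∀ x, 0 < R x)
    (γ γ' : ℝ → EuclideanSpace ℝ (Fin d))
    (hγ : ∀ t ∈ Set.Icc (0:ℝ) 1, HasDerivAt γ (γ' t) t)
    (hγ' : ContinuousOn γ' (Set.Icc 0 1))
    (N : ℕ) (hN : 0 < N) (t : Fin (N + 1) → ℝ) (hmono : Monotone t)
    (ht0 : t 0 = 0) (htN : t (Fin.last N) = 1)
    (hstep : ∀ j : Fin N, (j : ℕ) + 1 ≤ N - 1 →
      ‖γ (t j.succ) - γ (t j.castSucc)‖ = R (γ (t j.castSucc)) / 2 ∧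
      ∀ s ∈ Set.Icc (t j.castSucc) (t j.succ),
        ‖γ s - γ (t j.castSucc)‖ ≤ R (γ (t j.castSucc)) / 2) :
    (N : ℝ) ≤ 3 * ∫ s in (0:ℝ)..1, ‖γ' s‖ / R (γ s) + 1 :=
  stmt_3_general R hlip hpos γ γ' hγ hγ' N t hmono ht0 htN hstep
end

section
/- Let R : ℝ^d → (0,∞) be 1-Lipschitz and write B(x) = B(x; R(x)/2). There exists a countable, locally finite set S ⊂ ℝ^d and a constant C (depending only on d) such that (a) the balls B(s; R(s)/4), s ∈ S, cover ℝ^d, and (b) every point of ℝ^d belongs to at most C of the balls B(s; R(s)/2), s ∈ S. -/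
open Metric MeasureTheory ENNReal

lemma count_bound {d : ℕ} (x : EuclideanSpace ℝ (Fin d)) {r : ℝ} (hr : 0 < r)
    (F : Finset (EuclideanSpace ℝ (Fin d)))
    (hdisj : (F : Set (EuclideanSpace ℝ (Fin d))).Pairwise
      (fun s t => Disjoint (closedBall s r) (closedBall t r)))
    (hsub : ∀ s ∈ F, closedBall s r ⊆ closedBall x (14 * r)) :
    F.card ≤ 14 ^ d := by
  set μ := (volume : Measure (EuclideanSpace ℝ (Fin d)))
  have hμ : ∀ s : EuclideanSpace ℝ (Fin d),
      μ (closedBall s r) = ENNReal.ofReal (r ^ d) * μ (ball 0 1) := fun s => by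
    rw [Measure.addHaar_closedBall μ s hr.le, finrank_euclideanSpace_fin]
  have hU : μ (⋃ s ∈ F, closedBall s r) = ∑ s ∈ F, μ (closedBall s r) :=
    measure_biUnion_finset hdisj (fun s _ => measurableSet_closedBall)
  have h1 : (F.card : ℝ≥0∞) * (ENNReal.ofReal (r ^ d) * μ (ball 0 1))
      ≤ ENNReal.ofReal (14 ^ d) * (ENNReal.ofReal (r ^ d) * μ (ball 0 1)) := by
    calc (F.card : ℝ≥0∞) * (ENNReal.ofReal (r ^ d) * μ (ball 0 1))
        = ∑ s ∈ F, μ (closedBall s r) := by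
          rw [Finset.sum_congr rfl fun s _ => hμ s, Finset.sum_const, nsmul_eq_mul]
      _ = μ (⋃ s ∈ F, closedBall s r) := hU.symm
      _ ≤ μ (closedBall x (14 * r)) := measure_mono (Set.iUnion₂_subset hsub)
      _ = ENNReal.ofReal ((14 * r) ^ d) * μ (ball 0 1) := by
          rw [Measure.addHaar_closedBall μ x (by positivity), finrank_euclideanSpace_fin]
      _ = ENNReal.ofReal (14 ^ d) * (ENNReal.ofReal (r ^ d) * μ (ball 0 1)) := by
          rw [mul_pow, ENNReal.ofReal_mul (by positivity), mul_assoc]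
  have hX0 : ENNReal.ofReal (r ^ d) * μ (ball 0 1) ≠ 0 :=
    mul_ne_zero (ENNReal.ofReal_pos.2 (by positivity)).ne' (measure_ball_pos μ 0 one_pos).ne'
  have hXt : ENNReal.ofReal (r ^ d) * μ (ball 0 1) ≠ ⊤ :=
    ENNReal.mul_ne_top ENNReal.ofReal_ne_top measure_ball_lt_top.ne
  have h2 : (F.card : ℝ≥0∞) ≤ ENNReal.ofReal (14 ^ d) :=
    (ENNReal.mul_le_mul_iff_left hX0 hXt).1 h1
  have h3 : ENNReal.ofReal ((14 : ℝ) ^ d) = ((14 ^ d : ℕ) : ℝ≥0∞) := by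
    rw [ENNReal.ofReal_pow (by norm_num)]
    norm_num
  rw [h3] at h2
  exact_mod_cast h2

/-- Whitney-type covering.  There is a constant `C` depending only on
the dimension `d` such that for every positive 1-Lipschitz `R : ℝ^d → (0,∞)` there is a
countable, locally finite set `S ⊂ ℝ^d` with:
(a) the balls `B(s; R(s)/4)`, `s ∈ S`, cover `ℝ^d`;
(b) every point lies in at most `C` of the balls `B(s; R(s)/2)`, `s ∈ S`. -/
theorem stmt_4 (d : ℕ) :
    ∃ C : ℕ, ∀ R : EuclideanSpace ℝ (Fin d) → ℝ,
      LipschitzWith 1 R → (∀ x, 0 < R x) →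
      ∃ S : Set (EuclideanSpace ℝ (Fin d)),
        S.Countable ∧
        (∀ K : Set (EuclideanSpace ℝ (Fin d)), IsCompact K → (S ∩ K).Finite) ∧
        (∀ x, ∃ s ∈ S, x ∈ closedBall s (R s / 4)) ∧
        (∀ x, ({s ∈ S | x ∈ closedBall s (R s / 2)}).encard ≤ (C : ℕ∞)) := by
  refine ⟨14 ^ d, fun R hL hR => ?_⟩
  have hLip : ∀ s t : EuclideanSpace ℝ (Fin d), |R s - R t| ≤ dist s t := fun s t => by
    have := hL.dist_le_mul s t
    rwa [Real.dist_eq, NNReal.coe_one, one_mul] at this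
  -- the family of separated sets
  set 𝒮 : Set (Set (EuclideanSpace ℝ (Fin d))) :=
    {S | ∀ s ∈ S, ∀ t ∈ S, s ≠ t → min (R s) (R t) / 4 < dist s t} with h𝒮
  obtain ⟨m, hm⟩ : ∃ m, Maximal (· ∈ 𝒮) m := by
    apply zorn_subset
    intro c hc hchain
    refine ⟨⋃₀ c, ?_, fun s hs => Set.subset_sUnion_of_mem hs⟩
    rintro s ⟨A, hA, hsA⟩ t ⟨B, hB, htB⟩ hst
    rcases hchain.total hA hB with h | h
    · exact hc hB s (h hsA) t htB hst
    · exact hc hA s hsA t (h htB) hst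
  have hmem : m ∈ 𝒮 := hm.1
  -- coverage claim
  have hcov : ∀ x : EuclideanSpace ℝ (Fin d), ∃ s ∈ m, dist x s ≤ min (R x) (R s) / 4 := by
    intro x
    by_cases hx : x ∈ m
    · refine ⟨x, hx, ?_⟩
      rw [dist_self, min_self]
      have := hR x; linarith
    by_contra hcon
    push_neg at hcon
    have hins : insert x m ∈ 𝒮 := by
      rintro s hs t ht hst
      rcases Set.mem_insert_iff.1 hs with rfl | hs'
      · rcases Set.mem_insert_iff.1 ht with rfl | ht'
        · exact absurd rfl hst
        · exact hcon t ht'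
      · rcases Set.mem_insert_iff.1 ht with rfl | ht'
        · rw [dist_comm, min_comm]
          exact hcon s hs'
        · exact hmem s hs' t ht' hst
    exact hx (hm.2 hins (Set.subset_insert x m) (Set.mem_insert x m))
  -- the overlap bound
  have hover : ∀ x : EuclideanSpace ℝ (Fin d),
      ({s ∈ m | x ∈ closedBall s (R s / 2)}).encard ≤ ((14 ^ d : ℕ) : ℕ∞) := by
    intro x
    set T := {s ∈ m | x ∈ closedBall s (R s / 2)} with hT
    have hTd : ∀ s ∈ T, dist x s ≤ R s / 2 := fun s hs => mem_closedBall.1 hs.2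
    have hRle : ∀ s ∈ T, R s ≤ 2 * R x := by
      intro s hs
      have h1 := (abs_le.1 (hLip s x)).2
      have h2 := hTd s hs
      rw [dist_comm] at h1
      linarith
    have hRge : ∀ s ∈ T, 2 / 3 * R x ≤ R s := by
      intro s hs
      have h1 := (abs_le.1 (hLip x s)).2
      have h2 := hTd s hs
      linarith
    by_contra hcon
    push_neg at hcon
    have hlt : ((14 ^ d : ℕ) : ℕ∞) + 1 ≤ T.encard := Order.add_one_le_of_lt hcon
    obtain ⟨t, hts, htc⟩ := Set.exists_subset_encard_eq (k := ((14 ^ d + 1 : ℕ) : ℕ∞))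
      (by exact_mod_cast hlt)
    have htfin : t.Finite := Set.finite_of_encard_eq_coe htc
    set F := htfin.toFinset with hF
    have hFT : ∀ s, s ∈ F → s ∈ T := fun s hs => hts (htfin.mem_toFinset.1 hs)
    have hrpos : 0 < R x / 13 := div_pos (hR x) (by norm_num)
    have hcard : F.card ≤ 14 ^ d := by
      apply count_bound x hrpos
      · intro s hs u hu hsu
        have hs' := hFT s (Finset.mem_coe.1 hs)
        have hu' := hFT u (Finset.mem_coe.1 hu)
        apply closedBall_disjoint_closedBall
        have hsep : min (R s) (R u) / 4 < dist s u := hmem s hs'.1 u hu'.1 hsu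
        have h1 := hRge s hs'
        have h2 := hRge u hu'
        have : R x / 6 ≤ min (R s) (R u) / 4 := by
          rcases min_cases (R s) (R u) with ⟨h, _⟩ | ⟨h, _⟩ <;> rw [h] <;> linarith
        linarith
      · intro s hs
        have hs' := hFT s hs
        apply closedBall_subset_closedBall'
        have h1 := hTd s hs'
        have h2 := hRle s hs'
        rw [dist_comm]
        linarith
    have hFc : (F.card : ℕ∞) = ((14 ^ d + 1 : ℕ) : ℕ∞) := by
      rw [← htfin.encard_eq_coe_toFinset_card, htc]
    have : F.card = 14 ^ d + 1 := by exact_mod_cast hFc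
    omega
  -- local finiteness
  have hfin : ∀ K : Set (EuclideanSpace ℝ (Fin d)), IsCompact K → (m ∩ K).Finite := by
    intro K hK
    obtain ⟨t, htK, hcover⟩ := hK.elim_nhds_subcover (fun x => ball x (R x / 3))
      (fun x _ => ball_mem_nhds x (div_pos (hR x) (by norm_num)))
    have hsub : m ∩ K ⊆ ⋃ x ∈ t, {s ∈ m | x ∈ closedBall s (R s / 2)} := by
      rintro s ⟨hsm, hsK⟩
      obtain ⟨x, hxt, hsx⟩ := Set.mem_iUnion₂.1 (hcover hsK)
      refine Set.mem_iUnion₂.2 ⟨x, hxt, hsm, mem_closedBall.2 ?_⟩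
      have hd : dist s x < R x / 3 := mem_ball.1 hsx
      have h1 := (abs_le.1 (hLip x s)).2
      rw [dist_comm] at h1
      rw [dist_comm]
      linarith
    exact (Set.Finite.biUnion t.finite_toSet
      (fun x _ => Set.finite_of_encard_le_coe (hover x))).subset hsub
  -- countability
  have hcount : m.Countable := by
    have hsub : m ⊆ ⋃ n : ℕ, m ∩ closedBall 0 n := by
      intro s hs
      exact Set.mem_iUnion.2 ⟨⌈dist s 0⌉₊, hs, mem_closedBall.2 (Nat.le_ceil _)⟩
    exact Set.Countable.mono hsub
      (Set.countable_iUnion fun n => (hfin _ (isCompact_closedBall 0 n)).countable)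
  refine ⟨m, hcount, hfin, fun x => ?_, fun x => hover x⟩
  obtain ⟨s, hsm, hd⟩ := hcov x
  refine ⟨s, hsm, mem_closedBall.2 (hd.trans ?_)⟩
  have h1 : min (R x) (R s) ≤ R s := min_le_right _ _
  linarith
end

section
/- Let X be a complete separable metric space, Y a metric space, and f : X → Y a continuous map. Then the map K(X) × Y → K(X) defined by (K, y) ↦ K ∩ f^{-1}({y}) is Borel measurable. -/
/-- The space of all compact subsets of `X` (including `∅`). -/
def KSpace (X : Type*) [TopologicalSpace X] : Type _ := { s : Set X // IsCompact s }

/-- The Borel σ-field of the Vietoris topology (equivalently, of the Hausdorff metric)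
on the space of compact subsets: it is generated by the sets `{K : K ⊆ U}` and
`{K : K ∩ U ≠ ∅}`, `U` open in `X`. -/
def kBorel (X : Type*) [TopologicalSpace X] : MeasurableSpace (KSpace X) :=
  MeasurableSpace.generateFrom
    { A | ∃ U : Set X, IsOpen U ∧
        (A = { K : KSpace X | K.1 ⊆ U } ∨ A = { K : KSpace X | (K.1 ∩ U).Nonempty }) }

/-!
For a closed `C ⊆ X`, the pair `(K, y)` satisfies `K ∩ f⁻¹{y} ∩ C ≠ ∅` iff `y` lies in the
compact, hence closed, set `f(K ∩ C)`. Since `range f` is separable, membership in such a set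
is tested by countably many conditions "`f(K ∩ C)` meets the ball `B(d, 1/(n+1))` and
`y ∈ B(d, 1/(n+1))`" with `d` in a countable dense subset of `range f`; the first condition is a
Vietoris hitting condition for the `F_σ` set `C ∩ f⁻¹ B(d, 1/(n+1))`. Preimages of both kinds of
Vietoris generators reduce to such sets.
-/

open MeasureTheory MeasurableSpace Set Metric TopologicalSpace

instance KSpace.instMeasurableSpace (X : Type*) [TopologicalSpace X] :
    MeasurableSpace (KSpace X) :=
  kBorel X

lemma measurableSet_kBorel_inter_nonempty_of_isClosed {X : Type*} [TopologicalSpace X]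
    {C : Set X} (hC : IsClosed C) :
    MeasurableSet {K : KSpace X | (K.1 ∩ C).Nonempty} := by
  have : MeasurableSet {K : KSpace X | K.1 ⊆ Cᶜ} :=
    measurableSet_generateFrom ⟨Cᶜ, hC.isOpen_compl, Or.inl rfl⟩
  convert this.compl using 1
  ext K
  simp only [mem_ofPred_eq, mem_compl_iff, subset_compl_iff_disjoint_right,
    not_disjoint_iff_nonempty_inter]

lemma measurableSet_kBorel_inter_nonempty_of_isClosed_of_isOpen {X : Type*}
    [PseudoEMetricSpace X] {C V : Set X} (hC : IsClosed C) (hV : IsOpen V) :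
    MeasurableSet {K : KSpace X | (K.1 ∩ (C ∩ V)).Nonempty} := by
  obtain ⟨F, hF, -, rfl, -⟩ := hV.exists_iUnion_isClosed
  have : {K : KSpace X | (K.1 ∩ (C ∩ ⋃ n, F n)).Nonempty}
      = ⋃ n, {K : KSpace X | (K.1 ∩ (C ∩ F n)).Nonempty} := by
    ext K
    simp [inter_iUnion, nonempty_iUnion]
  rw [this]
  exact .iUnion fun n => measurableSet_kBorel_inter_nonempty_of_isClosed (hC.inter (hF n))

lemma mem_iff_forall_exists_inter_ball_nonempty {Y : Type*} [PseudoMetricSpace Y]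
    {Z D : Set Y} (hZ : IsClosed Z) (hZD : Z ⊆ closure D) {y : Y} :
    y ∈ Z ↔ ∀ n : ℕ, ∃ d ∈ D,
      (Z ∩ ball d (1 / (n + 1))).Nonempty ∧ y ∈ ball d (1 / (n + 1)) := by
  constructor
  · intro hy n
    obtain ⟨d, hdD, hyd⟩ := Metric.mem_closure_iff.1 (hZD hy) _ Nat.one_div_pos_of_nat
    exact ⟨d, hdD, ⟨y, hy, hyd⟩, hyd⟩
  · intro h
    rw [← hZ.closure_eq, Metric.mem_closure_iff]
    intro ε hε
    obtain ⟨n, hn⟩ := exists_nat_one_div_lt (half_pos hε)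
    obtain ⟨d, -, ⟨z, hzZ, hzd⟩, hyd⟩ := h n
    refine ⟨z, hzZ, ?_⟩
    calc dist y z ≤ dist y d + dist z d := dist_triangle_right y z d
      _ < 1 / (n + 1) + 1 / (n + 1) := add_lt_add hyd hzd
      _ < ε := by linarith

lemma inter_preimage_singleton_inter_nonempty_iff {X Y : Type*} {f : X → Y} {K C : Set X}
    {y : Y} :
    (K ∩ f ⁻¹' {y} ∩ C).Nonempty ↔ y ∈ f '' (K ∩ C) := by
  constructor
  · rintro ⟨x, ⟨hxK, hxy⟩, hxC⟩
    exact ⟨x, ⟨hxK, hxC⟩, hxy⟩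
  · rintro ⟨x, ⟨hxK, hxC⟩, hxy⟩
    exact ⟨x, ⟨hxK, hxy⟩, hxC⟩

lemma measurableSet_inter_preimage_singleton_inter_nonempty {X Y : Type*} [PseudoEMetricSpace X]
    [MetricSpace Y] [MeasurableSpace Y] [OpensMeasurableSpace Y] {f : X → Y} (hf : Continuous f)
    {D : Set Y} (hD : D.Countable) (hfD : range f ⊆ closure D) {C : Set X} (hC : IsClosed C) :
    MeasurableSet {p : KSpace X × Y | (p.1.1 ∩ f ⁻¹' {p.2} ∩ C).Nonempty} := by
  have hclosed (K : KSpace X) : IsClosed (f '' (K.1 ∩ C)) :=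
    ((K.2.inter_right hC).image hf).isClosed
  have : {p : KSpace X × Y | (p.1.1 ∩ f ⁻¹' {p.2} ∩ C).Nonempty}
      = ⋂ n : ℕ, ⋃ d ∈ D,
          {K : KSpace X | (K.1 ∩ (C ∩ f ⁻¹' ball d (1 / (n + 1)))).Nonempty} ×ˢ
            ball d (1 / (n + 1)) := by
    ext ⟨K, y⟩
    simp only [mem_ofPred_eq, mem_iInter, mem_iUnion, mem_prod, exists_prop]
    rw [inter_preimage_singleton_inter_nonempty_iff,
      mem_iff_forall_exists_inter_ball_nonempty (hclosed K) ((image_subset_range _ _).trans hfD)]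
    simp only [image_inter_nonempty_iff, inter_assoc]
  rw [this]
  exact .iInter fun n => .biUnion hD fun d _ =>
    (measurableSet_kBorel_inter_nonempty_of_isClosed_of_isOpen hC
      (isOpen_ball.preimage hf)).prod measurableSet_ball

theorem stmt_14_general (X Y : Type*) [MetricSpace X]
    [TopologicalSpace.SeparableSpace X] [MetricSpace Y]
    (f : X → Y) (hf : Continuous f) :
    @Measurable (KSpace X × Y) (KSpace X)
      (@Prod.instMeasurableSpace _ _ (kBorel X) (borel Y)) (kBorel X)
      (fun p => ⟨p.1.1 ∩ f ⁻¹' {p.2},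
        p.1.2.inter_right ((isClosed_singleton).preimage hf)⟩) := by
  borelize Y
  obtain ⟨D, hD, hfD⟩ := isSeparable_range hf
  refine measurable_generateFrom ?_
  rintro _ ⟨U, hU, rfl | rfl⟩
  · convert (measurableSet_inter_preimage_singleton_inter_nonempty hf hD hfD
      hU.isClosed_compl).compl using 1
    ext p
    simp only [mem_ofPred_eq, mem_compl_iff, inter_compl_nonempty_iff, not_not]
    exact Iff.rfl
  · obtain ⟨F, hF, -, rfl, -⟩ := hU.exists_iUnion_isClosed
    convert MeasurableSet.iUnion fun n =>
      measurableSet_inter_preimage_singleton_inter_nonempty hf hD hfD (hF n) using 1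
    ext p
    simp only [mem_ofPred_eq, mem_iUnion, inter_iUnion, nonempty_iUnion]
    exact Iff.rfl

/-- for a complete separable metric space `X`, a metric space `Y` and a
continuous `f : X → Y`, the map `K(X) × Y → K(X)`, `(K, y) ↦ K ∩ f⁻¹({y})`, is Borel. -/
theorem stmt_14 (X Y : Type*) [MetricSpace X] [CompleteSpace X]
    [TopologicalSpace.SeparableSpace X] [MetricSpace Y]
    (f : X → Y) (hf : Continuous f) :
    @Measurable (KSpace X × Y) (KSpace X)
      (@Prod.instMeasurableSpace _ _ (kBorel X) (borel Y)) (kBorel X)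
      (fun p => ⟨p.1.1 ∩ f ⁻¹' {p.2},
        p.1.2.inter_right ((isClosed_singleton).preimage hf)⟩) :=
  stmt_14_general X Y f hf
end

section
/- Let X be a complete separable metric space, K(X) the space of its compact subsets with the Vietoris topology. The Vietoris topology on K(X) is generated by the functions K ↦ max_{x∈K} φ(x) (with the convention max_∅ φ = −∞), where φ runs over bounded continuous functions X → ℝ. -/
/-- The Vietoris topology on the space of compact subsets, generated by the sets
`{K : K ⊆ U}` and `{K : K ∩ U ≠ ∅}`, `U` open in `X`. -/
def vietoris (X : Type*) [TopologicalSpace X] : TopologicalSpace (KSpace X) :=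
  TopologicalSpace.generateFrom
    { A | ∃ U : Set X, IsOpen U ∧
        (A = { K : KSpace X | K.1 ⊆ U } ∨ A = { K : KSpace X | (K.1 ∩ U).Nonempty }) }

open TopologicalSpace Set Metric BoundedContinuousFunction

lemma aux_lt_biSup {X : Type*} {s : Set X} {f : X → EReal} {a : EReal} :
    a < ⨆ x ∈ s, f x ↔ ∃ x ∈ s, a < f x := by
  simp [lt_iSup_iff]

lemma aux_biSup_lt {X : Type*} [TopologicalSpace X] {K : Set X} (hK : IsCompact K)
    {f : X → ℝ} (hf : Continuous f) {a : EReal} (ha : ⊥ < a) :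
    (⨆ x ∈ K, ((f x : ℝ) : EReal)) < a ↔ ∀ x ∈ K, ((f x : ℝ) : EReal) < a := by
  constructor
  · intro h x hx
    exact lt_of_le_of_lt (le_biSup (f := fun x => ((f x : ℝ) : EReal)) hx) h
  · intro h
    rcases K.eq_empty_or_nonempty with rfl | hne
    · simpa using ha
    · obtain ⟨x₀, hx₀, hmax⟩ := hK.exists_isMaxOn hne hf.continuousOn
      refine lt_of_le_of_lt (iSup₂_le fun x hx => ?_) (h x₀ hx₀)
      exact EReal.coe_le_coe_iff.2 (hmax hx)

/-- for a complete separable metric space `X`, the Vietoris topology on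
`K(X)` coincides with the initial topology induced by the functionals
`K ↦ max_{x ∈ K} φ(x)` (with `max_∅ φ = −∞`, so the functionals take values in
`[−∞, ∞) ⊂ EReal`), where `φ` runs over bounded continuous functions `X → ℝ`. -/
theorem stmt_15 (X : Type*) [MetricSpace X] [CompleteSpace X]
    [TopologicalSpace.SeparableSpace X] :
    vietoris X =
      ⨅ φ : BoundedContinuousFunction X ℝ,
        TopologicalSpace.induced
          (fun K : KSpace X => ⨆ x ∈ K.1, ((φ x : ℝ) : EReal)) inferInstance := by
  apply le_antisymm
  · -- vietoris is finer: each functional is vietoris-continuous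
    letI : TopologicalSpace (KSpace X) := vietoris X
    refine le_iInf fun φ => ?_
    rw [show (inferInstance : TopologicalSpace EReal)
        = generateFrom { s | ∃ a : EReal, s = Ioi a ∨ s = Iio a } from
        OrderTopology.topology_eq_generate_intervals, induced_generateFrom_eq]
    refine le_generateFrom ?_
    rintro A ⟨s, ⟨a, rfl | rfl⟩, rfl⟩
    · -- preimage of `Ioi a` is `{K | K meets {φ > a}}`
      have key : (fun K : KSpace X => ⨆ x ∈ K.1, ((φ x : ℝ) : EReal)) ⁻¹' Ioi a
          = { K : KSpace X | (K.1 ∩ ((fun x => ((φ x : ℝ) : EReal)) ⁻¹' Ioi a)).Nonempty } := by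
        ext K
        simp only [mem_preimage, mem_Ioi, mem_setOf_eq, aux_lt_biSup]
        constructor
        · rintro ⟨x, hx, hlt⟩; exact ⟨x, hx, hlt⟩
        · rintro ⟨x, hx, hlt⟩; exact ⟨x, hx, hlt⟩
      rw [key]
      exact TopologicalSpace.GenerateOpen.basic _
        ⟨_, (isOpen_Ioi.preimage (continuous_coe_real_ereal.comp φ.continuous)), Or.inr rfl⟩
    · -- preimage of `Iio a`
      induction a using EReal.rec with
      | bot =>
          have : (fun K : KSpace X => ⨆ x ∈ K.1, ((φ x : ℝ) : EReal)) ⁻¹' Iio ⊥ = ∅ := by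
            simp
          rw [this]; exact isOpen_empty
      | top =>
          have : (fun K : KSpace X => ⨆ x ∈ K.1, ((φ x : ℝ) : EReal)) ⁻¹' Iio ⊤ = univ := by
            refine eq_univ_of_forall fun K => ?_
            have h1 : (⨆ x ∈ K.1, ((φ x : ℝ) : EReal)) ≤ ((‖φ‖ : ℝ) : EReal) :=
              iSup₂_le fun x _ => EReal.coe_le_coe_iff.2 (φ.apply_le_norm x)
            exact lt_of_le_of_lt h1 (EReal.coe_lt_top _)
          rw [this]; exact isOpen_univ
      | coe r =>
          have key : (fun K : KSpace X => ⨆ x ∈ K.1, ((φ x : ℝ) : EReal)) ⁻¹' Iio (r : EReal)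
              = { K : KSpace X | K.1 ⊆ (fun x => φ x) ⁻¹' Iio r } := by
            ext K
            simp only [mem_preimage, mem_Iio, mem_setOf_eq]
            rw [aux_biSup_lt K.2 φ.continuous (EReal.bot_lt_coe r)]
            constructor
            · intro h x hx
              exact EReal.coe_lt_coe_iff.1 (h x hx)
            · intro h x hx
              exact EReal.coe_lt_coe_iff.2 (h hx)
          rw [key]
          exact TopologicalSpace.GenerateOpen.basic _
            ⟨_, isOpen_Iio.preimage φ.continuous, Or.inl rfl⟩
  · -- each vietoris generator is open in the initial topology
    letI : TopologicalSpace (KSpace X) :=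
      ⨅ φ : BoundedContinuousFunction X ℝ,
        TopologicalSpace.induced
          (fun K : KSpace X => ⨆ x ∈ K.1, ((φ x : ℝ) : EReal)) inferInstance
    refine le_generateFrom ?_
    rintro A ⟨U, hU, rfl | rfl⟩
    · by_cases hc : Uᶜ.Nonempty
      · -- use φ = -(min (infDist · Uᶜ) 1)
        set f : X → ℝ := fun x => -(min (infDist x Uᶜ) 1) with hfdef
        have hf : Continuous f := ((continuous_infDist_pt Uᶜ).min continuous_const).neg
        have hb : ∀ x, ‖f x‖ ≤ 1 := by
          intro x
          rw [Real.norm_eq_abs, hfdef, abs_neg,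
            abs_of_nonneg (le_min infDist_nonneg zero_le_one)]
          exact min_le_right _ _
        set φ : BoundedContinuousFunction X ℝ := ofNormedAddCommGroup f hf 1 hb with hφdef
        have hφx : ∀ x, φ x = f x := fun x => rfl
        have key : { K : KSpace X | K.1 ⊆ U }
            = (fun K : KSpace X => ⨆ x ∈ K.1, ((φ x : ℝ) : EReal)) ⁻¹' Iio (0 : EReal) := by
          ext K
          simp only [mem_setOf_eq, mem_preimage, mem_Iio]
          have h0 : ((0 : ℝ) : EReal) = (0 : EReal) := rfl
          rw [← h0, aux_biSup_lt K.2 φ.continuous (EReal.bot_lt_coe 0)]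
          constructor
          · intro h x hx
            have hxU : x ∈ U := h hx
            have hpos : 0 < infDist x Uᶜ :=
              (hU.isClosed_compl.notMem_iff_infDist_pos hc).1 (by simpa using hxU)
            have : f x < 0 := by
              rw [hfdef]; simp only [neg_lt, neg_zero]
              exact lt_min hpos one_pos
            rw [hφx]
            exact EReal.coe_lt_coe_iff.2 this
          · intro h x hx
            have hlt : f x < 0 := by
              have := h x hx; rw [hφx] at this
              exact EReal.coe_lt_coe_iff.1 this
            have hpos : 0 < infDist x Uᶜ := by
              rw [hfdef] at hlt
              simp only [neg_lt, neg_zero] at hlt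
              rcases lt_min_iff.1 hlt with ⟨h1, _⟩
              exact h1
            have : x ∉ Uᶜ :=
              (hU.isClosed_compl.notMem_iff_infDist_pos hc).2 hpos
            simpa using this
        rw [key]
        exact TopologicalSpace.le_def.1 (iInf_le _ φ) _ ⟨Iio (0 : EReal), isOpen_Iio, rfl⟩
      · have hUuniv : U = univ := by
          rw [← compl_empty_iff]
          exact not_nonempty_iff_eq_empty.1 hc
        have : { K : KSpace X | K.1 ⊆ U } = univ := by
          refine eq_univ_of_forall fun K => ?_
          simp [hUuniv]
        rw [this]; exact isOpen_univ
    · -- {K | K ∩ U ≠ ∅}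
      classical
      let ψ : {p : X × ℝ // 0 < p.2 ∧ ball p.1 p.2 ⊆ U} → BoundedContinuousFunction X ℝ :=
        fun p => ofNormedAddCommGroup (fun x => max (1 - dist x p.1.1 / p.1.2) 0)
          ((continuous_const.sub ((continuous_id.dist continuous_const).div_const _)).max
            continuous_const) 1
          (by
            intro x
            rw [Real.norm_eq_abs, abs_of_nonneg (le_max_right _ _)]
            refine max_le ?_ zero_le_one
            exact sub_le_self 1 (div_nonneg dist_nonneg p.2.1.le))
      have hψx : ∀ p x, ψ p x = max (1 - dist x p.1.1 / p.1.2) 0 := fun p x => rfl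
      have key : { K : KSpace X | (K.1 ∩ U).Nonempty }
          = ⋃ p : {p : X × ℝ // 0 < p.2 ∧ ball p.1 p.2 ⊆ U},
              (fun K : KSpace X => ⨆ x ∈ K.1, ((ψ p x : ℝ) : EReal)) ⁻¹' Ioi (0 : EReal) := by
        ext K
        simp only [mem_setOf_eq, mem_iUnion, mem_preimage, mem_Ioi]
        constructor
        · rintro ⟨x, hxK, hxU⟩
          obtain ⟨ε, hε, hball⟩ := Metric.isOpen_iff.1 hU x hxU
          refine ⟨⟨(x, ε), hε, hball⟩, ?_⟩
          rw [aux_lt_biSup]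
          refine ⟨x, hxK, ?_⟩
          have : ψ ⟨(x, ε), hε, hball⟩ x = 1 := by
            rw [hψx]; simp [hε.ne']
          rw [this]
          exact_mod_cast EReal.coe_lt_coe_iff.2 one_pos
        · rintro ⟨p, hp⟩
          rw [aux_lt_biSup] at hp
          obtain ⟨x, hxK, hlt⟩ := hp
          have hψpos : 0 < ψ p x := by exact_mod_cast hlt
          rw [hψx] at hψpos
          have h1 : 0 < 1 - dist x p.1.1 / p.1.2 := by
            rcases (lt_max_iff.1 hψpos) with h | h
            · exact h
            · exact absurd h (lt_irrefl 0)
          have hdist : dist x p.1.1 < p.1.2 :=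
            (div_lt_one p.2.1).1 (sub_pos.mp h1)
          exact ⟨x, hxK, p.2.2 hdist⟩
      rw [key]
      exact isOpen_iUnion fun p =>
        TopologicalSpace.le_def.1 (iInf_le _ (ψ p)) _ ⟨Ioi (0 : EReal), isOpen_Ioi, rfl⟩
end
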